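/- arXiv:2308.09982 — 4 statements merged into one kernel-verified Lean document; each statement's English description precedes it below -/
import Mathlib

section
/- Let $G_1, G_2$ be finite groups and $\psi: G_1 \to G_2$ any map. For $0 < \varepsilon < 1/1600$, either the number of pairs $(x,y) \in G_1 \times G_1$ with $\psi(xy) = \psi(x)\psi(y)$ is less than $(1-\varepsilon)|G_1|^2$, or there exists a subset $S \subseteq G_1$ with $|S| > (1-\sqrt{\varepsilon})|G_1|$ and a group homomorphism $f: G_1 \to G_2$ such that $f$ agrees with $\psi$ on $S$. -/
set_option maxHeartbeats 1000000

open Finset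

lemma aux_card_equiv {α β : Type*} [Fintype α] [Fintype β] [DecidableEq α] [DecidableEq β]
    (e : α ≃ β) (p : β → Prop) [DecidablePred p] :
    (Finset.univ.filter (fun a => p (e a))).card = (Finset.univ.filter p).card := by
  apply Finset.card_bij' (fun a _ => e a) (fun b _ => e.symm b) <;> simp

lemma aux_prod_card {α : Type*} [Fintype α] (p : α × α → Prop) [DecidablePred p] :
    (Finset.univ.filter p).card = ∑ y : α, (Finset.univ.filter (fun z => p (y, z))).card := by
  rw [Finset.card_filter, Fintype.sum_prod_type]
  exact Finset.sum_congr rfl fun y _ => (Finset.card_filter _ _).symm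

theorem stmt0 {G₁ G₂ : Type*} [Group G₁] [Group G₂] [Fintype G₁] [Fintype G₂]
    [DecidableEq G₁] [DecidableEq G₂] (ψ : G₁ → G₂) (ε : ℝ)
    (hε0 : 0 < ε) (hε1 : ε < 1 / 1600) :
    ((Finset.univ.filter
        (fun p : G₁ × G₁ => ψ (p.1 * p.2) = ψ p.1 * ψ p.2)).card : ℝ)
      < (1 - ε) * (Fintype.card G₁ : ℝ) ^ 2 ∨
    ∃ S : Finset G₁, ((S.card : ℝ) > (1 - Real.sqrt ε) * (Fintype.card G₁ : ℝ)) ∧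
      ∃ f : G₁ →* G₂, ∀ x ∈ S, f x = ψ x := by
  classical
  rw [or_iff_not_imp_left]
  intro h
  push_neg at h
  set n : ℝ := (Fintype.card G₁ : ℝ) with hn_def
  have hn0 : (0 : ℕ) < Fintype.card G₁ := Fintype.card_pos
  have hn : 0 < n := by rw [hn_def]; exact_mod_cast hn0
  set B : Finset (G₁ × G₁) :=
    Finset.univ.filter (fun p : G₁ × G₁ => ¬ (ψ (p.1 * p.2) = ψ p.1 * ψ p.2)) with hB_def
  have huniv2 : ((Finset.univ : Finset (G₁ × G₁)).card : ℝ) = n ^ 2 := by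
    rw [Finset.card_univ, Fintype.card_prod]
    push_cast
    ring
  have hBcard : (B.card : ℝ) ≤ ε * n ^ 2 := by
    have hsum := Finset.card_filter_add_card_filter_not
      (s := (Finset.univ : Finset (G₁ × G₁)))
      (p := fun p : G₁ × G₁ => ψ (p.1 * p.2) = ψ p.1 * ψ p.2)
    have hsum' : ((Finset.univ.filter
        (fun p : G₁ × G₁ => ψ (p.1 * p.2) = ψ p.1 * ψ p.2)).card : ℝ) + (B.card : ℝ) = n ^ 2 := by
      rw [← huniv2]
      exact_mod_cast hsum
    nlinarith [h]
  set N : G₁ → G₂ → ℕ :=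
    fun x a => (Finset.univ.filter (fun y => ψ (x * y) * (ψ y)⁻¹ = a)).card with hN_def
  have hmax : ∀ x : G₁, ∃ a : G₂, ∀ b : G₂, N x b ≤ N x a := by
    intro x
    obtain ⟨a, -, ha⟩ := Finset.exists_max_image (Finset.univ : Finset G₂) (N x)
      ⟨1, Finset.mem_univ 1⟩
    exact ⟨a, fun b => ha b (Finset.mem_univ b)⟩
  choose f₀ hf₀ using hmax
  -- Key 1 : plurality value is very popular
  have key1 : ∀ x : G₁, (1 - 2 * ε) * n ≤ (N x (f₀ x) : ℝ) := by
    intro x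
    set g : G₁ → G₂ := fun y => ψ (x * y) * (ψ y)⁻¹ with hg_def
    set T : Finset (G₁ × G₁) :=
      Finset.univ.filter (fun p : G₁ × G₁ => g p.1 = g p.2) with hT_def
    -- lower bound on T
    have e1card : (Finset.univ.filter
        (fun p : G₁ × G₁ => (x * p.1, p.1⁻¹ * p.2) ∈ B)).card = B.card := by
      have := aux_card_equiv
        (⟨fun p : G₁ × G₁ => (x * p.1, p.1⁻¹ * p.2),
          fun q : G₁ × G₁ => (x⁻¹ * q.1, x⁻¹ * q.1 * q.2),
          by intro p; simp [mul_assoc], by intro q; simp [mul_assoc]⟩ : (G₁ × G₁) ≃ (G₁ × G₁))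
        (fun q => q ∈ B)
      simpa using this
    have e2card : (Finset.univ.filter
        (fun p : G₁ × G₁ => (p.1, p.1⁻¹ * p.2) ∈ B)).card = B.card := by
      have := aux_card_equiv
        (⟨fun p : G₁ × G₁ => (p.1, p.1⁻¹ * p.2),
          fun q : G₁ × G₁ => (q.1, q.1 * q.2),
          by intro p; simp [mul_assoc], by intro q; simp [mul_assoc]⟩ : (G₁ × G₁) ≃ (G₁ × G₁))
        (fun q => q ∈ B)
      simpa using this
    have hsub : Finset.univ.filter (fun p : G₁ × G₁ => ¬ (g p.1 = g p.2)) ⊆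
        (Finset.univ.filter (fun p : G₁ × G₁ => (x * p.1, p.1⁻¹ * p.2) ∈ B)) ∪
        (Finset.univ.filter (fun p : G₁ × G₁ => (p.1, p.1⁻¹ * p.2) ∈ B)) := by
      intro p hp
      simp only [Finset.mem_filter, Finset.mem_univ, true_and, Finset.mem_union] at hp ⊢
      by_contra hc
      push_neg at hc
      obtain ⟨h1, h2⟩ := hc
      simp only [hB_def, Finset.mem_filter, Finset.mem_univ, true_and, not_not] at h1 h2
      apply hp
      have e1 : x * p.2 = (x * p.1) * (p.1⁻¹ * p.2) := by group
      have e2 : p.2 = p.1 * (p.1⁻¹ * p.2) := by group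
      simp only [hg_def]
      rw [e1, h1]
      conv_rhs => rw [e2, h2]
      group
    have hTc : (Finset.univ.filter (fun p : G₁ × G₁ => ¬ (g p.1 = g p.2))).card ≤ 2 * B.card := by
      calc (Finset.univ.filter (fun p : G₁ × G₁ => ¬ (g p.1 = g p.2))).card
          ≤ _ := Finset.card_le_card hsub
        _ ≤ _ := Finset.card_union_le _ _
        _ = 2 * B.card := by rw [e1card, e2card]; ring
    have hsplit := Finset.card_filter_add_card_filter_not
      (s := (Finset.univ : Finset (G₁ × G₁))) (p := fun p : G₁ × G₁ => g p.1 = g p.2)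
    have hTlow : n ^ 2 - 2 * (ε * n ^ 2) ≤ (T.card : ℝ) := by
      have h1 : (T.card : ℝ) + ((Finset.univ.filter
          (fun p : G₁ × G₁ => ¬ (g p.1 = g p.2))).card : ℝ) = n ^ 2 := by
        rw [← huniv2]; exact_mod_cast hsplit
      have h2 : ((Finset.univ.filter
          (fun p : G₁ × G₁ => ¬ (g p.1 = g p.2))).card : ℝ) ≤ 2 * (B.card : ℝ) := by
        exact_mod_cast hTc
      nlinarith [hBcard]
    -- upper bound on T
    have hTup : (T.card : ℕ) ≤ Fintype.card G₁ * N x (f₀ x) := by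
      rw [hT_def, aux_prod_card]
      calc ∑ y : G₁, (Finset.univ.filter (fun z => g y = g z)).card
          ≤ ∑ _y : G₁, N x (f₀ x) := by
            apply Finset.sum_le_sum
            intro y _
            have hy : (Finset.univ.filter (fun z => g y = g z)).card = N x (g y) := by
              simp only [hN_def]
              congr 1
              ext z
              simp [hg_def, eq_comm]
            rw [hy]
            exact hf₀ x (g y)
        _ = Fintype.card G₁ * N x (f₀ x) := by
            rw [Finset.sum_const, Finset.card_univ, smul_eq_mul]
    have hTup' : (T.card : ℝ) ≤ n * (N x (f₀ x) : ℝ) := by rw [hn_def]; exact_mod_cast hTup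
    rw [← mul_le_mul_iff_right₀ hn]
    nlinarith
  -- Key 2 : f₀ is a homomorphism
  have key2 : ∀ x y : G₁, f₀ (x * y) = f₀ x * f₀ y := by
    intro x y
    set A1 := Finset.univ.filter (fun z => ψ (x * y * z) * (ψ z)⁻¹ = f₀ (x * y)) with hA1
    set A2 := Finset.univ.filter (fun z => ψ (x * (y * z)) * (ψ (y * z))⁻¹ = f₀ x) with hA2
    set A3 := Finset.univ.filter (fun z => ψ (y * z) * (ψ z)⁻¹ = f₀ y) with hA3
    have h1 : (1 - 2 * ε) * n ≤ (A1.card : ℝ) := key1 (x * y)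
    have h3 : (1 - 2 * ε) * n ≤ (A3.card : ℝ) := key1 y
    have h2 : (1 - 2 * ε) * n ≤ (A2.card : ℝ) := by
      have hcard : A2.card = N x (f₀ x) := by
        have := aux_card_equiv (Equiv.mulLeft y)
          (fun w => ψ (x * w) * (ψ w)⁻¹ = f₀ x)
        simpa [hA2, Equiv.mulLeft] using this
      rw [hcard]
      exact key1 x
    have hinter : ∀ s t : Finset G₁, (s.card : ℝ) + (t.card : ℝ) - n ≤ ((s ∩ t).card : ℝ) := by
      intro s t
      have h := Finset.card_inter_add_card_union s t
      have hu : ((s ∪ t).card : ℝ) ≤ n := by rw [hn_def]; exact_mod_cast Finset.card_le_univ (s ∪ t)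
      have h' : ((s ∩ t).card : ℝ) + ((s ∪ t).card : ℝ) = (s.card : ℝ) + (t.card : ℝ) := by
        exact_mod_cast h
      linarith
    have h12 : (A1.card : ℝ) + (A2.card : ℝ) - n ≤ (((A1 ∩ A2)).card : ℝ) := hinter A1 A2
    have h123 : ((A1 ∩ A2).card : ℝ) + (A3.card : ℝ) - n ≤ (((A1 ∩ A2 ∩ A3)).card : ℝ) :=
      hinter (A1 ∩ A2) A3
    have hpos : (0 : ℝ) < ((A1 ∩ A2 ∩ A3).card : ℝ) := by nlinarith
    have hne : (A1 ∩ A2 ∩ A3).Nonempty := by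
      rw [← Finset.card_pos]
      exact_mod_cast hpos
    obtain ⟨z, hz⟩ := hne
    simp only [Finset.mem_inter, hA1, hA2, hA3, Finset.mem_filter, Finset.mem_univ,
      true_and] at hz
    obtain ⟨⟨hz1, hz2⟩, hz3⟩ := hz
    rw [← hz1, ← hz2, ← hz3, mul_assoc x y z]
    group
  -- bad counts and the set S
  set bad : G₁ → ℕ :=
    fun x => (Finset.univ.filter (fun y => ¬ (ψ (x * y) = ψ x * ψ y))).card with hbad_def
  have hbadsum : B.card = ∑ x : G₁, bad x := by
    simp only [hbad_def]
    rw [hB_def]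
    exact aux_prod_card _
  set S : Finset G₁ :=
    Finset.univ.filter (fun x => (bad x : ℝ) ≤ Real.sqrt ε * n) with hS_def
  have hsq : Real.sqrt ε * Real.sqrt ε = ε := Real.mul_self_sqrt hε0.le
  have hsqpos : 0 < Real.sqrt ε := Real.sqrt_pos.mpr hε0
  have hsqlt : Real.sqrt ε < 1 / 40 := by
    rw [show (1 : ℝ) / 40 = Real.sqrt ((1 / 40) ^ 2) by
      rw [Real.sqrt_sq]; norm_num]
    exact Real.sqrt_lt_sqrt hε0.le (by nlinarith)
  -- cardinality of S
  have hScard : (S.card : ℝ) > (1 - Real.sqrt ε) * n := by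
    rcases Finset.eq_empty_or_nonempty Sᶜ with hc | hc
    · have : S = Finset.univ := by
        rw [← Finset.compl_empty, ← hc, compl_compl]
      rw [this, Finset.card_univ]
      nlinarith
    · have hlow : (Sᶜ.card : ℝ) * (Real.sqrt ε * n) < ∑ x ∈ Sᶜ, (bad x : ℝ) := by
        have := Finset.sum_lt_sum_of_nonempty hc
          (f := fun _ : G₁ => Real.sqrt ε * n) (g := fun x => (bad x : ℝ))
          (by
            intro x hx
            simp only [hS_def, Finset.mem_compl, Finset.mem_filter, Finset.mem_univ,
              true_and, not_le] at hx
            exact hx)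
        simpa [Finset.sum_const, nsmul_eq_mul] using this
      have hup : ∑ x ∈ Sᶜ, (bad x : ℝ) ≤ ε * n ^ 2 := by
        have h1 : ∑ x ∈ Sᶜ, (bad x : ℝ) ≤ ∑ x : G₁, (bad x : ℝ) :=
          Finset.sum_le_sum_of_subset_of_nonneg (Finset.subset_univ _)
            (fun i _ _ => by positivity)
        have h2 : ∑ x : G₁, (bad x : ℝ) = (B.card : ℝ) := by exact_mod_cast hbadsum.symm
        linarith [hBcard]
      have hclt : (Sᶜ.card : ℝ) < Real.sqrt ε * n := by
        by_contra hcon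
        push_neg at hcon
        have : (Real.sqrt ε * n) * (Real.sqrt ε * n) ≤ (Sᶜ.card : ℝ) * (Real.sqrt ε * n) := by
          apply mul_le_mul_of_nonneg_right hcon
          positivity
        nlinarith
      have hcompl : (Sᶜ.card : ℝ) = n - (S.card : ℝ) := by
        have := Finset.card_compl S
        have hle : S.card ≤ Fintype.card G₁ := Finset.card_le_univ S
        rw [this]
        push_cast [hle]
        ring
      nlinarith
  -- f₀ agrees with ψ on S
  have hagree : ∀ x ∈ S, f₀ x = ψ x := by
    intro x hx
    simp only [hS_def, Finset.mem_filter, Finset.mem_univ, true_and] at hx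
    set A := Finset.univ.filter (fun y => ψ (x * y) * (ψ y)⁻¹ = ψ x) with hA
    have hAcard : n - Real.sqrt ε * n ≤ (A.card : ℝ) := by
      have hsub : Finset.univ.filter (fun y => ψ (x * y) = ψ x * ψ y) ⊆ A := by
        intro y hy
        simp only [Finset.mem_filter, Finset.mem_univ, true_and, hA] at hy ⊢
        rw [hy]
        group
      have hsplit := Finset.card_filter_add_card_filter_not
        (s := (Finset.univ : Finset G₁)) (p := fun y => ψ (x * y) = ψ x * ψ y)
      have h1 : ((Finset.univ.filter (fun y => ψ (x * y) = ψ x * ψ y)).card : ℝ)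
          + (bad x : ℝ) = n := by
        rw [hn_def, ← Finset.card_univ]
        exact_mod_cast hsplit
      have h2 : ((Finset.univ.filter (fun y => ψ (x * y) = ψ x * ψ y)).card : ℝ)
          ≤ (A.card : ℝ) := by exact_mod_cast Finset.card_le_card hsub
      linarith [hx]
    by_contra hne
    have hdisj : Disjoint A (Finset.univ.filter (fun y => ψ (x * y) * (ψ y)⁻¹ = f₀ x)) := by
      rw [Finset.disjoint_left]
      intro y hy1 hy2
      simp only [hA, Finset.mem_filter, Finset.mem_univ, true_and] at hy1 hy2
      exact hne (by rw [← hy1, ← hy2])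
    have hunion : A.card + N x (f₀ x) ≤ Fintype.card G₁ := by
      rw [← Finset.card_union_of_disjoint hdisj]
      exact Finset.card_le_univ _
    have hunion' : (A.card : ℝ) + (N x (f₀ x) : ℝ) ≤ n := by rw [hn_def]; exact_mod_cast hunion
    have := key1 x
    nlinarith
  refine ⟨S, hScard, MonoidHom.mk' f₀ key2, hagree⟩
end

section
/- Let $p$ be a prime, $m, m'$ positive integers, and $x, y \in \mathrm{SL}_2(\mathcal{O})$ for a commutative ring $\mathcal{O}$ with a prime ideal $\mathcal{P}$, satisfying $x \equiv 1 \pmod{\mathcal{P}^m}$ and $y \equiv 1 \pmod{\mathcal{P}^{m'}}$. Then $xyx^{-1}y^{-1} \equiv 1 + xy - yx \pmod{\mathcal{P}^{m+m'+\min\{m,m'\}}}$. -/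
open Matrix

private lemma entry_mul_mem' {O : Type*} [CommRing O] {I J : Ideal O}
    {A B : Matrix (Fin 2) (Fin 2) O}
    (hA : ∀ i j, A i j ∈ I) (hB : ∀ i j, B i j ∈ J) :
    ∀ i j, (A * B) i j ∈ I * J := by
  intro i j
  rw [Matrix.mul_apply]
  exact Ideal.sum_mem _ fun k _ => Ideal.mul_mem_mul (hA i k) (hB k j)

private lemma inv_entries' {O : Type*} [CommRing O] {P : Ideal O} {n : ℕ}
    (x : Matrix.SpecialLinearGroup (Fin 2) O)
    (hx : ∀ i j, ((x : Matrix (Fin 2) (Fin 2) O) - 1) i j ∈ P ^ n) :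
    ∀ i j, (((x⁻¹ : Matrix.SpecialLinearGroup (Fin 2) O) : Matrix (Fin 2) (Fin 2) O) - 1) i j ∈ P ^ n := by
  intro i j
  rw [Matrix.SpecialLinearGroup.coe_inv, Matrix.adjugate_fin_two]
  fin_cases i <;> fin_cases j <;> simp [Matrix.sub_apply, Matrix.one_apply]
  · have := hx 1 1; simpa [Matrix.sub_apply, Matrix.one_apply] using this
  · have := hx 0 1; simpa [Matrix.sub_apply, Matrix.one_apply] using (neg_mem this)
  · have := hx 1 0; simpa [Matrix.sub_apply, Matrix.one_apply] using (neg_mem this)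
  · have := hx 0 0; simpa [Matrix.sub_apply, Matrix.one_apply] using this

theorem stmt4 {O : Type*} [CommRing O] (P : Ideal O) (m m' : ℕ)
    (hm : 0 < m) (hm' : 0 < m')
    (x y : Matrix.SpecialLinearGroup (Fin 2) O)
    (hx : ∀ i j, ((x : Matrix (Fin 2) (Fin 2) O) - 1) i j ∈ P ^ m)
    (hy : ∀ i j, ((y : Matrix (Fin 2) (Fin 2) O) - 1) i j ∈ P ^ m') :
    ∀ i j,
      (((x * y * x⁻¹ * y⁻¹ : Matrix.SpecialLinearGroup (Fin 2) O) :
          Matrix (Fin 2) (Fin 2) O)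
        - (1 + (x : Matrix (Fin 2) (Fin 2) O) * y - (y : Matrix (Fin 2) (Fin 2) O) * x)) i j
        ∈ P ^ (m + m' + min m m') := by
  intro i j
  set X := (x : Matrix (Fin 2) (Fin 2) O) with hX
  set Y := (y : Matrix (Fin 2) (Fin 2) O) with hY
  set Xi := ((x⁻¹ : Matrix.SpecialLinearGroup (Fin 2) O) : Matrix (Fin 2) (Fin 2) O) with hXi
  set Yi := ((y⁻¹ : Matrix.SpecialLinearGroup (Fin 2) O) : Matrix (Fin 2) (Fin 2) O) with hYi
  have hXXi : X * Xi = 1 := by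
    rw [hX, hXi, ← Matrix.SpecialLinearGroup.coe_mul, mul_inv_cancel,
      Matrix.SpecialLinearGroup.coe_one]
  have hYYi : Y * Yi = 1 := by
    rw [hY, hYi, ← Matrix.SpecialLinearGroup.coe_mul, mul_inv_cancel,
      Matrix.SpecialLinearGroup.coe_one]
  have hcoe : ((x * y * x⁻¹ * y⁻¹ : Matrix.SpecialLinearGroup (Fin 2) O) :
      Matrix (Fin 2) (Fin 2) O) = X * Y * Xi * Yi := by
    simp [hX, hY, hXi, hYi]
  have h1 : Y * X * (Xi * Yi) = 1 := by
    rw [mul_assoc Y X, ← mul_assoc X Xi, hXXi, one_mul, hYYi]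
  have key : ((x * y * x⁻¹ * y⁻¹ : Matrix.SpecialLinearGroup (Fin 2) O) :
      Matrix (Fin 2) (Fin 2) O) - (1 + X * Y - Y * X)
      = (X * Y - Y * X) * (Xi * Yi - 1) := by
    rw [hcoe, sub_mul, mul_sub, mul_sub, mul_one, mul_one, h1]
    noncomm_ring
  rw [key]
  have hAB : ∀ i j, (X * Y - Y * X) i j ∈ P ^ (m + m') := by
    have hid : X * Y - Y * X = (X - 1) * (Y - 1) - (Y - 1) * (X - 1) := by noncomm_ring
    intro i j
    rw [hid, Matrix.sub_apply, pow_add]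
    exact sub_mem (entry_mul_mem' hx hy i j)
      ((mul_comm (P ^ m) (P ^ m')) ▸ entry_mul_mem' hy hx i j)
  have hxm : ∀ i j, (Xi - 1) i j ∈ P ^ min m m' := fun i j =>
    Ideal.pow_le_pow_right (min_le_left m m') (inv_entries' x hx i j)
  have hym : ∀ i j, (Yi - 1) i j ∈ P ^ min m m' := fun i j =>
    Ideal.pow_le_pow_right (min_le_right m m') (inv_entries' y hy i j)
  have hC : ∀ i j, (Xi * Yi - 1) i j ∈ P ^ min m m' := by
    have hid : Xi * Yi - 1 = (Xi - 1) * (Yi - 1) + (Xi - 1) + (Yi - 1) := by noncomm_ring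
    intro i j
    rw [hid, Matrix.add_apply, Matrix.add_apply]
    refine add_mem (add_mem ?_ (hxm i j)) (hym i j)
    have := entry_mul_mem' hxm hym i j
    exact Ideal.mul_le_right this
  rw [pow_add]
  exact entry_mul_mem' hAB hC i j
end

section
/- Let $q$ be a positive integer and let $V$ denote the trace-zero $2\times 2$ integer matrices (the Lie algebra of $\mathrm{SL}_2$ over $\mathbb{Z}$). Let $\vec{v}, \vec{w} \in V$ be primitive (gcd of entries equals 1) and suppose for every prime $p \mid q$, the reductions of $\vec{v}$ and $\vec{w}$ mod $p$ are linearly independent over $\mathbb{F}_p$. Then $[\vec{v}, V] + [\vec{w}, V] \supseteq 2V \pmod{q}$, i.e., every element of $2V$ mod $q$ is congruent to a sum $[\vec{v}, X] + [\vec{w}, Y]$ for some $X, Y \in V$. -/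
def cp (v w : Fin 3 → ℤ) : Fin 3 → ℤ :=
  ![v 1 * w 2 - v 2 * w 1, v 2 * w 0 - v 0 * w 2, v 0 * w 1 - v 1 * w 0]

def dt (v w : Fin 3 → ℤ) : ℤ := v 0 * w 0 + v 1 * w 1 + v 2 * w 2

def det3 (a b c : Fin 3 → ℤ) : ℤ := dt a (cp b c)

def Indep (p : ℕ) (v w : Fin 3 → ℤ) : Prop :=
  ∀ α β : ℤ, (∀ i, (p:ℤ) ∣ α * v i + β * w i) → (p:ℤ) ∣ α ∧ (p:ℤ) ∣ β

lemma cramer_id (v w e t : Fin 3 → ℤ) (i : Fin 3) :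
    (dt (cp v w) e)^2 * t i =
      cp v (fun j => det3 t (cp v e) (cp w e) * w j + det3 (cp v w) t (cp w e) * e j) i
      + cp w (fun j => det3 (cp v w) (cp v e) t * e j) i := by
  fin_cases i <;> simp [cp, dt, det3] <;> ring

lemma cp_smul (v X : Fin 3 → ℤ) (c : ℤ) (k : Fin 3) :
    cp v (fun j => c * X j) k = c * cp v X k := by
  fin_cases k <;> simp [cp] <;> ring

lemma cross_par {F : Type*} [Field F] (a b c x y z : F)
    (h : ¬(a = 0 ∧ b = 0 ∧ c = 0))
    (h1 : b*z - c*y = 0) (h2 : c*x - a*z = 0) (h3 : a*y - b*x = 0) :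
    ∃ l : F, x = l*a ∧ y = l*b ∧ z = l*c := by
  by_cases ha : a = 0
  · by_cases hb : b = 0
    · have hc : c ≠ 0 := by tauto
      refine ⟨z/c, ?_, ?_, ?_⟩
      · rw [div_mul_eq_mul_div, eq_div_iff hc]; linear_combination h2
      · rw [div_mul_eq_mul_div, eq_div_iff hc]; linear_combination -h1
      · rw [div_mul_eq_mul_div, eq_div_iff hc]
    · refine ⟨y/b, ?_, ?_, ?_⟩
      · rw [div_mul_eq_mul_div, eq_div_iff hb]; linear_combination -h3
      · rw [div_mul_eq_mul_div, eq_div_iff hb]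
      · rw [div_mul_eq_mul_div, eq_div_iff hb]; linear_combination h1
  · refine ⟨x/a, ?_, ?_, ?_⟩
    · rw [div_mul_eq_mul_div, eq_div_iff ha]
    · rw [div_mul_eq_mul_div, eq_div_iff ha]; linear_combination h3
    · rw [div_mul_eq_mul_div, eq_div_iff ha]; linear_combination -h2

lemma p_not_dvd_one (p : ℕ) (hp : p.Prime) (h : (p:ℤ) ∣ 1) : False := by
  have h1 := Int.le_of_dvd one_pos h
  have h2 := hp.two_le
  omega

lemma solve_mod_p (p : ℕ) (hp : p.Prime) (v w : Fin 3 → ℤ) (hind : Indep p v w)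
    (t : Fin 3 → ℤ) :
    ∃ X Y : Fin 3 → ℤ, ∀ i, (p:ℤ) ∣ t i - (cp v X i + cp w Y i) := by
  haveI : Fact p.Prime := ⟨hp⟩
  -- step 1 : some coordinate of cp v w is not divisible by p
  have hu : ¬ ∀ i, (p:ℤ) ∣ cp v w i := by
    intro hall
    have hz : ∀ i, ((cp v w i : ℤ) : ZMod p) = 0 := by
      intro i; rw [ZMod.intCast_zmod_eq_zero_iff_dvd]; exact hall i
    have hvne : ¬(((v 0 : ℤ) : ZMod p) = 0 ∧ ((v 1 : ℤ) : ZMod p) = 0 ∧ ((v 2 : ℤ) : ZMod p) = 0) := by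
      rintro ⟨h0, h1, h2⟩
      have := (hind 1 0 (by
        intro i
        have : ((v i : ℤ) : ZMod p) = 0 := by fin_cases i <;> assumption
        rw [ZMod.intCast_zmod_eq_zero_iff_dvd] at this
        simpa using this)).1
      exact p_not_dvd_one p hp this
    have h1 : ((v 1 : ℤ) : ZMod p) * ((w 2 : ℤ) : ZMod p) - ((v 2 : ℤ) : ZMod p) * ((w 1 : ℤ) : ZMod p) = 0 := by
      have := hz 0; simp [cp] at this; linear_combination this
    have h2 : ((v 2 : ℤ) : ZMod p) * ((w 0 : ℤ) : ZMod p) - ((v 0 : ℤ) : ZMod p) * ((w 2 : ℤ) : ZMod p) = 0 := by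
      have := hz 1; simp [cp] at this; linear_combination this
    have h3 : ((v 0 : ℤ) : ZMod p) * ((w 1 : ℤ) : ZMod p) - ((v 1 : ℤ) : ZMod p) * ((w 0 : ℤ) : ZMod p) = 0 := by
      have := hz 2; simp [cp] at this; linear_combination this
    obtain ⟨l, hl0, hl1, hl2⟩ := cross_par _ _ _ _ _ _ hvne h1 h2 h3
    obtain ⟨lz, rfl⟩ := ZMod.intCast_surjective l
    have := (hind lz (-1) (by
      intro i
      have hcast : ((lz * v i + (-1) * w i : ℤ) : ZMod p) = 0 := by
        push_cast
        have : ((w i : ℤ) : ZMod p) = (lz : ZMod p) * ((v i : ℤ) : ZMod p) := by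
          fin_cases i <;> assumption
        rw [this]; ring
      rwa [ZMod.intCast_zmod_eq_zero_iff_dvd] at hcast)).2
    rw [Int.dvd_neg] at this
    exact p_not_dvd_one p hp this
  push_neg at hu
  obtain ⟨i, hi⟩ := hu
  set e : Fin 3 → ℤ := fun j => if j = i then 1 else 0 with he
  have hde : dt (cp v w) e = cp v w i := by
    fin_cases i <;> simp [dt, he]
  have hns : ¬ (p:ℤ) ∣ (dt (cp v w) e)^2 := by
    rw [hde]
    intro hdvd
    exact hi ((Nat.prime_iff_prime_int.mp hp).dvd_of_dvd_pow hdvd)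
  have hcop : IsCoprime ((p:ℕ):ℤ) ((dt (cp v w) e)^2) :=
    (Nat.prime_iff_prime_int.mp hp).coprime_iff_not_dvd.mpr hns
  obtain ⟨m, n, hmn⟩ := hcop
  refine ⟨fun j => n * (det3 t (cp v e) (cp w e) * w j + det3 (cp v w) t (cp w e) * e j),
          fun j => n * (det3 (cp v w) (cp v e) t * e j), ?_⟩
  intro k
  have hlin : cp v (fun j => n * (det3 t (cp v e) (cp w e) * w j + det3 (cp v w) t (cp w e) * e j)) k
      + cp w (fun j => n * (det3 (cp v w) (cp v e) t * e j)) k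
      = n * ((dt (cp v w) e)^2 * t k) := by
    rw [cp_smul, cp_smul, ← mul_add, ← cramer_id]
  rw [hlin]
  exact ⟨m * t k, by linear_combination (-(t k)) * hmn⟩

lemma cp_addsmul (v X₀ X₁ : Fin 3 → ℤ) (c : ℤ) (k : Fin 3) :
    cp v (fun j => X₀ j + c * X₁ j) k = cp v X₀ k + c * cp v X₁ k := by
  fin_cases k <;> simp [cp] <;> ring

lemma solve_mod_q (v w : Fin 3 → ℤ) :
    ∀ q : ℕ, 0 < q → (∀ p : ℕ, p.Prime → p ∣ q → Indep p v w) →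
      ∀ t : Fin 3 → ℤ, ∃ X Y : Fin 3 → ℤ, ∀ i, (q:ℤ) ∣ t i - (cp v X i + cp w Y i) := by
  intro q
  induction q using Nat.strong_induction_on with
  | _ q ih =>
    intro hq hind t
    by_cases hq1 : q = 1
    · subst hq1
      exact ⟨0, 0, fun i => by simp⟩
    · set p := q.minFac with hpdef
      have hp : p.Prime := Nat.minFac_prime hq1
      obtain ⟨q', hqq⟩ := Nat.minFac_dvd q
      have hq'pos : 0 < q' := by
        rcases Nat.eq_zero_or_pos q' with h | h
        · subst h; omega
        · exact h
      have hlt : q' < q := by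
        rw [hqq]
        exact (lt_mul_iff_one_lt_left hq'pos).mpr hp.one_lt
      obtain ⟨X0, Y0, h0⟩ := solve_mod_p p hp v w (hind p hp ⟨q', hqq⟩) t
      set s : Fin 3 → ℤ := fun i => (t i - (cp v X0 i + cp w Y0 i)) / p with hsdef
      have hs : ∀ i, (p:ℤ) * s i = t i - (cp v X0 i + cp w Y0 i) := fun i =>
        Int.mul_ediv_cancel' (h0 i)
      obtain ⟨X1, Y1, h1⟩ := ih q' hlt hq'pos
        (fun r hr hrd => hind r hr (hrd.trans ⟨p, by rw [hqq]; ring⟩)) s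
      refine ⟨fun j => X0 j + (p:ℤ) * X1 j, fun j => Y0 j + (p:ℤ) * Y1 j, ?_⟩
      intro i
      have key : t i - (cp v (fun j => X0 j + (p:ℤ) * X1 j) i
          + cp w (fun j => Y0 j + (p:ℤ) * Y1 j) i)
          = (p:ℤ) * (s i - (cp v X1 i + cp w Y1 i)) := by
        rw [cp_addsmul, cp_addsmul]
        linear_combination -(hs i)
      rw [key, hqq]
      push_cast
      exact mul_dvd_mul_left _ (h1 i)

theorem stmt5 (q : ℕ) (hq : 0 < q) (v w : Matrix (Fin 2) (Fin 2) ℤ)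
    (hv : Matrix.trace v = 0) (hw : Matrix.trace w = 0)
    (hvprim : ∀ d : ℤ, (∀ i j, d ∣ v i j) → IsUnit d)
    (hwprim : ∀ d : ℤ, (∀ i j, d ∣ w i j) → IsUnit d)
    (hindep : ∀ p : ℕ, p.Prime → p ∣ q →
      ∀ a b : ℤ, (∀ i j, (p : ℤ) ∣ a * v i j + b * w i j) → (p : ℤ) ∣ a ∧ (p : ℤ) ∣ b) :
    ∀ Z : Matrix (Fin 2) (Fin 2) ℤ, Matrix.trace Z = 0 →
      ∃ X Y : Matrix (Fin 2) (Fin 2) ℤ, Matrix.trace X = 0 ∧ Matrix.trace Y = 0 ∧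
        ∀ i j, (q : ℤ) ∣ ((2 • Z) - ((v * X - X * v) + (w * Y - Y * w))) i j := by
  intro Z hZ
  rw [Matrix.trace_fin_two] at hv hw hZ
  have hv11 : v 1 1 = -(v 0 0) := by linarith
  have hw11 : w 1 1 = -(w 0 0) := by linarith
  have hz11 : Z 1 1 = -(Z 0 0) := by linarith
  set vv : Fin 3 → ℤ := ![v 0 0, v 0 1, v 1 0] with hvv
  set ww : Fin 3 → ℤ := ![w 0 0, w 0 1, w 1 0] with hww
  have hind : ∀ p : ℕ, p.Prime → p ∣ q → Indep p vv ww := by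
    intro p hp hpq α β hall3
    refine hindep p hp hpq α β ?_
    simp only [Fin.forall_fin_two]
    refine ⟨⟨?_, ?_⟩, ?_, ?_⟩
    · simpa [hvv, hww] using hall3 0
    · simpa [hvv, hww] using hall3 1
    · simpa [hvv, hww] using hall3 2
    · have h := hall3 0
      simp only [hvv, hww, Matrix.cons_val_zero] at h
      simp only [hv11, hw11]
      have heq : α * -(v 0 0) + β * -(w 0 0) = -(α * v 0 0 + β * w 0 0) := by ring
      rw [heq]
      exact (dvd_neg).mpr h
  obtain ⟨X, Y, hd⟩ := solve_mod_q vv ww q hq hind ![2 * Z 0 0, Z 1 0, Z 0 1]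
  refine ⟨Matrix.of ![![X 0, X 1], ![X 2, -(X 0)]],
          Matrix.of ![![Y 0, Y 1], ![Y 2, -(Y 0)]], ?_, ?_, ?_⟩
  · simp [Matrix.trace_fin_two]
  · simp [Matrix.trace_fin_two]
  · simp only [Fin.forall_fin_two]
    have h0 := hd 0
    have h1 := hd 1
    have h2 := hd 2
    simp only [hvv, hww, cp, Matrix.cons_val_zero, Matrix.cons_val_one, Matrix.head_cons,
      Matrix.cons_val_two, Matrix.tail_cons] at h0 h1 h2
    obtain ⟨K0, hK0⟩ := h0
    obtain ⟨K1, hK1⟩ := h1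
    obtain ⟨K2, hK2⟩ := h2
    refine ⟨⟨?_, ?_⟩, ?_, ?_⟩ <;>
      simp only [Matrix.sub_apply, Matrix.add_apply, Matrix.smul_apply, Matrix.mul_apply,
        Fin.sum_univ_two, Matrix.of_apply, Matrix.cons_val_zero, Matrix.cons_val_one,
        Matrix.head_cons, Matrix.head_fin_const, smul_eq_mul, hv11, hw11, hz11]
    · exact ⟨K0, by linear_combination hK0⟩
    · exact ⟨2 * K2, by linear_combination 2 * hK2⟩
    · exact ⟨2 * K1, by linear_combination 2 * hK1⟩
    · exact ⟨-K0, by linear_combination -hK0⟩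
end

section
/- Let $\Lambda = \mathrm{SL}_2(\mathbb{Z})$ and for a positive integer $m$ let $\Lambda(m)$ denote the principal congruence subgroup of level $m$. Suppose $h$ is a nontrivial group homomorphism from $\Lambda(p_1^{m_1})/\Lambda(p_1^{n_1})$ to $\Lambda(p_2^{m_2})/\Lambda(p_2^{n_2})$, where $p_1, p_2$ are primes, $0 \le m_1 \le n_1$, and $1 \le m_2 \le n_2$. Then $p_1 = p_2$. -/
open Finset in
lemma aux_pow {R : Type*} [Ring R] {p : ℕ} (hp : p.Prime) {j : ℕ} (hj : 1 ≤ j) (x : R)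
    (hx : (p : R) ^ j ∣ x - 1) : (p : R) ^ (j + 1) ∣ x ^ p - 1 := by
  obtain ⟨C, hC⟩ := hx
  have hx' : x = (p : R) ^ j * C + 1 := eq_add_of_sub_eq hC
  rw [hx', Commute.add_pow (Commute.one_right _), Finset.sum_range_succ']
  simp only [pow_zero, one_mul, Nat.sub_zero, one_pow, Nat.choose_zero_right, Nat.cast_one, mul_one]
  rw [add_sub_cancel_right]
  refine Finset.dvd_sum fun i hi => ?_
  have hi' : i + 1 ≤ p := Nat.succ_le_of_lt (Finset.mem_range.mp hi)
  have hcomm : Commute ((p : R) ^ j) C := (Nat.cast_commute p C).pow_left j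
  have hterm : ((p : R) ^ j * C) ^ (i + 1) = (p : R) ^ (j * (i + 1)) * C ^ (i + 1) := by
    rw [hcomm.mul_pow, ← pow_mul]
  rw [hterm]
  have hnat : p ^ (j + 1) ∣ p ^ (j * (i + 1)) * (p.choose (i + 1)) := by
    rcases eq_or_lt_of_le hi' with he | hlt
    · refine dvd_mul_of_dvd_left (pow_dvd_pow p ?_) _
      rw [he]; nlinarith [hp.two_le]
    · exact mul_dvd_mul (pow_dvd_pow p (Nat.le_mul_of_pos_right j (Nat.succ_pos i)))
        (hp.dvd_choose_self (Nat.succ_ne_zero i) hlt)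
  have : ((p : R) ^ (j + 1)) ∣ ((p ^ (j * (i+1)) * p.choose (i+1) : ℕ) : R) := by
    have := map_dvd (Nat.castRingHom R) hnat
    push_cast at this ⊢
    exact this
  calc (p:R)^(j+1) ∣ ((p ^ (j * (i+1)) * p.choose (i+1) : ℕ) : R) * C ^ (i+1) := this.mul_right _
    _ = (p : R) ^ (j * (i + 1)) * C ^ (i + 1) * ↑(p.choose (i + 1)) := by
        push_cast
        rw [mul_assoc, (Nat.cast_commute (p.choose (i+1)) (C ^ (i+1))).eq, mul_assoc]
lemma ker_pow_eq_one {p m n : ℕ} (hp : p.Prime) (hm : 1 ≤ m) (hmn : m ≤ n)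
    (x : Matrix.SpecialLinearGroup (Fin 2) (ZMod (p ^ n)))
    (hx : x ∈ (Matrix.SpecialLinearGroup.map
        (ZMod.castHom (pow_dvd_pow p hmn) (ZMod (p ^ m)))).ker) :
    x ^ p ^ (n - m) = 1 := by
  set R := ZMod (p ^ n) with hR
  set f := ZMod.castHom (pow_dvd_pow p hmn) (ZMod (p ^ m)) with hf
  have hker : ∀ a : R, f a = 0 → ∃ b : R, a = (p : R) ^ m * b := by
    intro a ha
    haveI : NeZero (p ^ m) := ⟨pow_ne_zero _ hp.pos.ne'⟩
    haveI : NeZero (p ^ n) := ⟨pow_ne_zero _ hp.pos.ne'⟩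
    have hval : ((a.val : ℕ) : ZMod (p ^ m)) = 0 := by
      rw [ZMod.natCast_val]
      rwa [ZMod.castHom_apply] at ha
    obtain ⟨c, hc⟩ := (ZMod.natCast_eq_zero_iff _ _).mp hval
    refine ⟨(c : R), ?_⟩
    have h2 : ((a.val : ℕ) : R) = a := ZMod.natCast_rightInverse a
    rw [← h2, hc]
    rw [Nat.cast_mul, Nat.cast_pow]
  have hmap : ((x : Matrix (Fin 2) (Fin 2) R)).map f = 1 := by
    have h1 : Matrix.SpecialLinearGroup.map f x = 1 := hx
    have h2 := congrArg (Subtype.val) h1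
    simpa [RingHom.mapMatrix_apply] using h2
  have hcast : ∀ k : ℕ, ((p : Matrix (Fin 2) (Fin 2) R)) ^ k
      = Matrix.diagonal (fun _ => (p : R) ^ k) := by
    intro k
    rw [← Matrix.diagonal_natCast, Matrix.diagonal_pow]
    congr 1
  have hentry : ∀ i j, ∃ b : R,
      ((x : Matrix (Fin 2) (Fin 2) R) - 1) i j = (p : R) ^ m * b := by
    intro i j
    refine hker _ ?_
    have := congrFun (congrFun hmap i) j
    have h1e : f ((1 : Matrix (Fin 2) (Fin 2) R) i j) = (1 : Matrix (Fin 2) (Fin 2) (ZMod (p^m))) i j := by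
      have : (1 : Matrix (Fin 2) (Fin 2) R).map f = 1 := Matrix.map_one f (map_zero f) (map_one f)
      exact congrFun (congrFun this i) j
    simp only [Matrix.sub_apply, map_sub]
    rw [show f ((x : Matrix (Fin 2) (Fin 2) R) i j) = _ from this, h1e]
    simp
  choose B hB using hentry
  -- matrix-level divisibility
  have hdvd : ((p : Matrix (Fin 2) (Fin 2) R)) ^ m ∣ (x : Matrix (Fin 2) (Fin 2) R) - 1 := by
    refine ⟨Matrix.of (fun i j => B i j), ?_⟩
    ext i j
    rw [hcast m]
    simp [Matrix.diagonal_mul, hB i j]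
  have key : ∀ k, ((p : Matrix (Fin 2) (Fin 2) R)) ^ (m + k) ∣
      (x : Matrix (Fin 2) (Fin 2) R) ^ (p ^ k) - 1 := by
    intro k
    induction k with
    | zero => simpa using hdvd
    | succ k ih =>
      have := aux_pow hp (le_trans hm (Nat.le_add_right m k))
        ((x : Matrix (Fin 2) (Fin 2) R) ^ (p ^ k)) ih
      rw [← pow_mul, ← pow_succ] at this
      rw [show m + (k + 1) = m + k + 1 from by omega]
      exact this
  have hzero : ((p : Matrix (Fin 2) (Fin 2) R)) ^ n = 0 := by
    have : ((p : R) ^ n) = 0 := by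
      have := ZMod.natCast_self (p ^ n)
      push_cast at this
      exact this
    rw [hcast n, this]
    simp
  have hfin := key (n - m)
  rw [show m + (n - m) = n from by omega, hzero] at hfin
  have hx1 : (x : Matrix (Fin 2) (Fin 2) R) ^ (p ^ (n - m)) - 1 = 0 := by
    simpa using hfin
  ext i j
  rw [Matrix.SpecialLinearGroup.coe_pow, Matrix.SpecialLinearGroup.coe_one]
  rw [sub_eq_zero] at hx1
  rw [hx1]

def Em12 {R : Type*} [CommRing R] (t : R) : Matrix.SpecialLinearGroup (Fin 2) R :=
  ⟨!![1, t; 0, 1], by simp [Matrix.det_fin_two_of]⟩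

def Em21 {R : Type*} [CommRing R] (t : R) : Matrix.SpecialLinearGroup (Fin 2) R :=
  ⟨!![1, 0; t, 1], by simp [Matrix.det_fin_two_of]⟩

lemma Em12_pow {R : Type*} [CommRing R] (t : R) (k : ℕ) : Em12 t ^ k = Em12 (k * t) := by
  induction k with
  | zero =>
    apply Subtype.ext
    rw [pow_zero]
    simp [Em12, Matrix.SpecialLinearGroup.coe_one, Matrix.one_fin_two]
  | succ k ih =>
    apply Subtype.ext
    rw [pow_succ, Matrix.SpecialLinearGroup.coe_mul, ih]
    simp only [Em12, Matrix.mul_fin_two]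
    push_cast
    congr 1 <;> ring_nf

lemma Em21_pow {R : Type*} [CommRing R] (t : R) (k : ℕ) : Em21 t ^ k = Em21 (k * t) := by
  induction k with
  | zero =>
    apply Subtype.ext
    rw [pow_zero]
    simp [Em21, Matrix.SpecialLinearGroup.coe_one, Matrix.one_fin_two]
  | succ k ih =>
    apply Subtype.ext
    rw [pow_succ, Matrix.SpecialLinearGroup.coe_mul, ih]
    simp only [Em21, Matrix.mul_fin_two]
    push_cast
    congr 1 <;> ring_nf

lemma nonunit_dvd {p n : ℕ} (hp : p.Prime) (hn : 1 ≤ n) (x : ZMod (p ^ n))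
    (hx : ¬ IsUnit x) : (p : ZMod (p ^ n)) ∣ x := by
  haveI : NeZero (p ^ n) := ⟨pow_ne_zero _ hp.pos.ne'⟩
  by_cases hv : p ∣ x.val
  · obtain ⟨c, hc⟩ := hv
    refine ⟨(c : ZMod (p ^ n)), ?_⟩
    have h2 : ((x.val : ℕ) : ZMod (p ^ n)) = x := ZMod.natCast_rightInverse x
    rw [← h2, hc]
    push_cast
    ring
  · exfalso
    apply hx
    have hcop : Nat.Coprime (x.val) (p ^ n) :=
      Nat.Coprime.pow_right _ ((hp.coprime_iff_not_dvd.mpr hv).symm)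
    have h2 : ((x.val : ℕ) : ZMod (p ^ n)) = x := ZMod.natCast_rightInverse x
    rw [← h2]
    exact (ZMod.isUnit_iff_coprime _ _).mpr hcop

lemma p_not_unit {p n : ℕ} (hp : p.Prime) (hn : 1 ≤ n) :
    ¬ IsUnit ((p : ZMod (p ^ n))) := by
  haveI : Fact (1 < p ^ n) := ⟨Nat.one_lt_pow (by omega) hp.one_lt⟩
  intro hu
  have h0 : ((p : ZMod (p ^ n)))^n = 0 := by
    have := ZMod.natCast_self (p ^ n)
    push_cast at this
    exact this
  have := hu.pow n
  rw [h0] at this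
  exact this.ne_zero rfl

lemma exists_unit_comb {p n : ℕ} (hp : p.Prime) (hn : 1 ≤ n) {a b c d : ZMod (p ^ n)}
    (hdet : a * d - b * c = 1) : ∃ z : ZMod (p ^ n), IsUnit (a + z * c) := by
  by_cases ha : IsUnit a
  · exact ⟨0, by simpa using ha⟩
  by_cases hac : IsUnit (a + c)
  · exact ⟨1, by simpa using hac⟩
  exfalso
  have h1 := nonunit_dvd hp hn a ha
  have h2 := nonunit_dvd hp hn (a + c) hac
  have hc : (p : ZMod (p ^ n)) ∣ c := by
    have := dvd_sub h2 h1
    simpa using this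
  have : (p : ZMod (p ^ n)) ∣ 1 := by
    rw [← hdet]
    exact dvd_sub (h1.mul_right d) (hc.mul_left b)
  exact p_not_unit hp hn (isUnit_of_dvd_one this)

lemma gen_trivial {p n : ℕ} (hp : p.Prime) (hn : 1 ≤ n) {H : Type*} [Group H]
    (φ : Matrix.SpecialLinearGroup (Fin 2) (ZMod (p ^ n)) →* H)
    (h12 : ∀ t, φ (Em12 t) = 1) (h21 : ∀ t, φ (Em21 t) = 1)
    (M : Matrix.SpecialLinearGroup (Fin 2) (ZMod (p ^ n))) : φ M = 1 := by
  set R := ZMod (p ^ n) with hR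
  set a := (M : Matrix (Fin 2) (Fin 2) R) 0 0 with ha
  set b := (M : Matrix (Fin 2) (Fin 2) R) 0 1 with hb
  set c := (M : Matrix (Fin 2) (Fin 2) R) 1 0 with hc
  set d := (M : Matrix (Fin 2) (Fin 2) R) 1 1 with hd
  have hdet : a * d - b * c = 1 := by
    have h2 := M.2
    rw [Matrix.det_fin_two] at h2
    exact h2
  obtain ⟨z, hz⟩ := exists_unit_comb hp hn hdet
  obtain ⟨u, hu⟩ := hz
  set i : R := ((u⁻¹ : (ZMod (p ^ n))ˣ) : R) with hi
  have h1 : (a + z * c) * i = 1 := by rw [← hu]; exact u.mul_inv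
  have hDdet : Matrix.det !![(a + z * c), 0; 0, i] = 1 := by
    rw [Matrix.det_fin_two_of]
    linear_combination h1
  set D : Matrix.SpecialLinearGroup (Fin 2) R := ⟨!![(a + z * c), 0; 0, i], hDdet⟩ with hD
  have hφD : φ D = 1 := by
    have hkey : D * (Em12 1 * Em21 (-1) * Em12 1)
        = Em12 (a + z * c) * Em21 (-i) * Em12 (a + z * c) := by
      apply Subtype.ext
      simp only [Matrix.SpecialLinearGroup.coe_mul]
      simp only [Em12, Em21, hD, Matrix.mul_fin_two]
      ext i' j'
      fin_cases i' <;> fin_cases j' <;> simp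
      · linear_combination h1
      · linear_combination -(a + z * c) * h1
      · ring
      · linear_combination h1
    have h2 := congrArg φ hkey
    simp only [map_mul, h12, h21, mul_one, one_mul] at h2
    exact h2
  set b' := b + z * d with hb'
  set s₂ := -(c * i) with hs₂
  set s₃ := -(b' * (a + z * c)) with hs₃
  have heq : Em12 s₃ * (Em21 s₂ * (Em12 z * M)) = D := by
    apply Subtype.ext
    have hM : (M : Matrix (Fin 2) (Fin 2) R) = !![a, b; c, d] := Matrix.eta_fin_two _
    simp only [Matrix.SpecialLinearGroup.coe_mul]
    simp only [Em12, Em21, hD]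
    rw [hM]
    simp only [Matrix.mul_fin_two]
    ext i' j'
    fin_cases i' <;> fin_cases j' <;> simp [hs₂, hs₃, hb']
    · linear_combination -(b + z * d) * c * (a + z * c) * h1
    · linear_combination c * (b + z * d) ^ 2 * h1 - (b + z * d) * hdet
    · linear_combination -c * h1
    · linear_combination -d * h1 + i * hdet
  have h3 := congrArg φ heq
  simp only [map_mul, h12, h21, hφD, one_mul] at h3
  exact h3

theorem stmt6 (p₁ p₂ : ℕ) (hp₁ : p₁.Prime) (hp₂ : p₂.Prime)
    (m₁ n₁ m₂ n₂ : ℕ) (hm₁ : m₁ ≤ n₁) (hm₂ : 1 ≤ m₂) (hn₂ : m₂ ≤ n₂)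
    (h : ((Matrix.SpecialLinearGroup.map
            (ZMod.castHom (pow_dvd_pow p₁ hm₁) (ZMod (p₁ ^ m₁)))).ker :
          Subgroup (Matrix.SpecialLinearGroup (Fin 2) (ZMod (p₁ ^ n₁)))) →*
        ((Matrix.SpecialLinearGroup.map
            (ZMod.castHom (pow_dvd_pow p₂ hn₂) (ZMod (p₂ ^ m₂)))).ker :
          Subgroup (Matrix.SpecialLinearGroup (Fin 2) (ZMod (p₂ ^ n₂)))))
    (hnontriv : ∃ ξ, h ξ ≠ 1) :
    p₁ = p₂ := by
  by_contra hne
  obtain ⟨ξ, hξ⟩ := hnontriv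
  have hcp : Nat.Coprime p₁ p₂ := (Nat.coprime_primes hp₁ hp₂).mpr hne
  -- the image has p₂-power order
  have htar : ∀ y : ((Matrix.SpecialLinearGroup.map
      (ZMod.castHom (pow_dvd_pow p₂ hn₂) (ZMod (p₂ ^ m₂)))).ker :
      Subgroup (Matrix.SpecialLinearGroup (Fin 2) (ZMod (p₂ ^ n₂)))),
      y ^ (p₂ ^ (n₂ - m₂)) = 1 := by
    intro y
    have := ker_pow_eq_one hp₂ hm₂ hn₂ (y : Matrix.SpecialLinearGroup (Fin 2) (ZMod (p₂ ^ n₂))) y.2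
    apply Subtype.ext
    rw [SubmonoidClass.coe_pow]
    simpa using this
  rcases Nat.eq_zero_or_pos m₁ with hm0 | hm1pos
  · -- m₁ = 0 : use generation by elementary matrices
    subst hm0
    rcases Nat.eq_zero_or_pos n₁ with hn0 | hn1pos
    · -- trivial source
      haveI : Subsingleton (ZMod (p₁ ^ n₁)) := by rw [hn0, pow_zero]; infer_instance
      apply hξ
      have hξ1 : ξ = 1 := by
        apply Subtype.ext
        apply Subtype.ext
        ext i j
        exact Subsingleton.elim _ _
      rw [hξ1, map_one]
    · haveI : Subsingleton (ZMod (p₁ ^ 0)) := by rw [pow_zero]; infer_instance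
      have hmem : ∀ x : Matrix.SpecialLinearGroup (Fin 2) (ZMod (p₁ ^ n₁)),
          x ∈ (Matrix.SpecialLinearGroup.map
            (ZMod.castHom (pow_dvd_pow p₁ (Nat.zero_le n₁)) (ZMod (p₁ ^ 0)))).ker := by
        intro x
        show Matrix.SpecialLinearGroup.map _ x = 1
        apply Subtype.ext
        ext i j
        exact Subsingleton.elim _ _
      set φ := h.comp ((MonoidHom.id _).codRestrict _ hmem) with hφ
      have horder : ∀ g : Matrix.SpecialLinearGroup (Fin 2) (ZMod (p₁ ^ n₁)),
          g ^ (p₁ ^ n₁) = 1 → φ g = 1 := by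
        intro g hg
        have o1 : orderOf (φ g) ∣ p₁ ^ n₁ :=
          orderOf_dvd_of_pow_eq_one (by rw [← map_pow, hg, map_one])
        have o2 : orderOf (φ g) ∣ p₂ ^ (n₂ - m₂) :=
          orderOf_dvd_of_pow_eq_one (htar (φ g))
        have hd := Nat.dvd_gcd o1 o2
        rw [Nat.Coprime.gcd_eq_one (hcp.pow _ _)] at hd
        exact orderOf_eq_one_iff.mp (Nat.dvd_one.mp hd)
      have hEpow : ((p₁ ^ n₁ : ℕ) : ZMod (p₁ ^ n₁)) = 0 := by
        exact_mod_cast ZMod.natCast_self (p₁ ^ n₁)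
      have h12 : ∀ t : ZMod (p₁ ^ n₁), φ (Em12 t) = 1 := by
        intro t
        apply horder
        rw [Em12_pow, hEpow, zero_mul]
        apply Subtype.ext
        simp [Em12, Matrix.one_fin_two]
      have h21 : ∀ t : ZMod (p₁ ^ n₁), φ (Em21 t) = 1 := by
        intro t
        apply horder
        rw [Em21_pow, hEpow, zero_mul]
        apply Subtype.ext
        simp [Em21, Matrix.one_fin_two]
      apply hξ
      have hcomm : φ (ξ : Matrix.SpecialLinearGroup (Fin 2) (ZMod (p₁ ^ n₁))) = h ξ :=
        congrArg h (Subtype.ext rfl)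
      rw [← hcomm]
      exact gen_trivial hp₁ hn1pos φ h12 h21 _
  · -- m₁ ≥ 1 : the source is a p₁-group
    have hsrc : ξ ^ (p₁ ^ (n₁ - m₁)) = 1 := by
      have := ker_pow_eq_one hp₁ hm1pos hm₁
        (ξ : Matrix.SpecialLinearGroup (Fin 2) (ZMod (p₁ ^ n₁))) ξ.2
      apply Subtype.ext
      rw [SubmonoidClass.coe_pow]
      simpa using this
    have o1 : orderOf (h ξ) ∣ p₁ ^ (n₁ - m₁) :=
      orderOf_dvd_of_pow_eq_one (by rw [← map_pow, hsrc, map_one])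
    have o2 : orderOf (h ξ) ∣ p₂ ^ (n₂ - m₂) :=
      orderOf_dvd_of_pow_eq_one (htar (h ξ))
    have hd := Nat.dvd_gcd o1 o2
    rw [Nat.Coprime.gcd_eq_one (hcp.pow _ _)] at hd
    exact hξ (orderOf_eq_one_iff.mp (Nat.dvd_one.mp hd))
end
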